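/- If the coloring φ is eventually periodic but not periodic, then there exists a nonempty finite connected subgraph K of T whose coloring appears exactly once: the only connected subgraph K' of T admitting a graph isomorphism from K to K' that preserves φ is K itself. -/

import Mathlib

open SimpleGraph

/-- Equivalence of colored `n`-balls around `x` and `y`: a graph isomorphism between the
induced subgraphs on the balls, sending center to center and preserving the coloring. -/
def BallEquiv {V A : Type*} (T : SimpleGraph V) (φ : V → A) (n : ℕ) (x y : V) : Prop :=
  ∃ f : {v : V // T.dist x v ≤ n} ≃ {v : V // T.dist y v ≤ n},
    ((f ⟨x, by simp [SimpleGraph.dist_self]⟩ : {v : V // T.dist y v ≤ n}) : V) = y ∧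
    (∀ u w : {v : V // T.dist x v ≤ n}, T.Adj (u : V) (w : V) ↔ T.Adj (f u : V) (f w : V)) ∧
    ∀ v : {v : V // T.dist x v ≤ n}, φ (f v : V) = φ (v : V)

/-- Two vertices are in the same class if a color-preserving automorphism of `T`
sends one to the other. -/
def SameClass {V A : Type*} (T : SimpleGraph V) (φ : V → A) (x y : V) : Prop :=
  ∃ g : V ≃ V, (∀ u w : V, T.Adj (g u) (g w) ↔ T.Adj u w) ∧ g x = y ∧ ∀ v, φ (g v) = φ v

/-- Subword complexity: the number of equivalence classes of colored `n`-balls. -/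
noncomputable def ballComplexity {V A : Type*} (T : SimpleGraph V) (φ : V → A) (n : ℕ) : ℕ :=
  Nat.card (Quot (BallEquiv T φ n))

/-- A coloring is periodic if it is invariant under a subgroup of the automorphism group
of `T` having finitely many orbits on vertices. -/
def IsPeriodicColoring {V A : Type*} (T : SimpleGraph V) (φ : V → A) : Prop :=
  ∃ Γ : Subgroup (Equiv.Perm V),
    (∀ γ ∈ Γ, ∀ u w : V, T.Adj (γ u) (γ w) ↔ T.Adj u w) ∧
    (∀ γ ∈ Γ, ∀ v, φ (γ v) = φ v) ∧
    Finite (Quot (fun x y : V => ∃ γ ∈ Γ, γ x = y))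

/-- The colored `n`-ball around `x` is special. -/
def IsSpecial {V A : Type*} (T : SimpleGraph V) (φ : V → A) (n : ℕ) (x : V) : Prop :=
  ∃ y z : V, BallEquiv T φ n x y ∧ BallEquiv T φ n x z ∧ ¬ BallEquiv T φ (n + 1) y z

/-- The type set of a vertex. -/
def TypeSet {V A : Type*} (T : SimpleGraph V) (φ : V → A) (x : V) : Set ℕ :=
  {n : ℕ | IsSpecial T φ n x}

/-- The maximal type of a vertex of bounded type (`-1` if the type set is empty). -/
noncomputable def maxType {V A : Type*} (T : SimpleGraph V) (φ : V → A) (x : V) : ℤ :=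
  sSup (insert (-1) ((fun n : ℕ => (n : ℤ)) '' TypeSet T φ x))

/-- The coloring is Sturmian if its subword complexity is `n + 2`. -/
def IsSturmian {V A : Type*} (T : SimpleGraph V) (φ : V → A) : Prop :=
  ∀ n : ℕ, ballComplexity T φ n = n + 2

/-- Eventually periodic coloring. -/
def IsEventuallyPeriodic {V A : Type*} (T : SimpleGraph V) (φ : V → A) : Prop :=
  ∃ K : Set V, K.Nonempty ∧ K.Finite ∧ (T.induce K).Connected ∧
    ∀ v : (Kᶜ : Set V), ∃ ψ : V → A, IsPeriodicColoring T ψ ∧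
      ∀ w : (Kᶜ : Set V), (T.induce (Kᶜ : Set V)).Reachable v w → ψ (w : V) = φ (w : V)

/-- The vertex set of the `n`-branch from `x` towards its neighbor `x'`. -/
def branchSet {V : Type*} (T : SimpleGraph V) (n : ℕ) (x x' : V) : Set V :=
  insert x {y : V | T.dist x y ≤ n ∧ T.dist y x' < T.dist y x}

/-- Equivalence of colored `n`-branches. -/
def BranchEquiv {V A : Type*} (T : SimpleGraph V) (φ : V → A) (n : ℕ)
    (x x' y y' : V) : Prop :=
  ∃ f : (branchSet T n x x') ≃ (branchSet T n y y'),
    ((f ⟨x, Set.mem_insert x _⟩ : (branchSet T n y y')) : V) = y ∧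
    (∀ u w : (branchSet T n x x'), T.Adj (u : V) (w : V) ↔ T.Adj (f u : V) (f w : V)) ∧
    ∀ v : (branchSet T n x x'), φ (f v : V) = φ (v : V)

/-- A coloring of `K` appears exactly once if the only connected subgraph of `T`
color-isomorphic to it is `K` itself. -/
def AppearsOnce {V A : Type*} (T : SimpleGraph V) (φ : V → A) (K : Set V) : Prop :=
  ∀ K' : Set V, (T.induce K').Connected →
    (∃ f : K ≃ K', (∀ u w : K, T.Adj (u : V) (w : V) ↔ T.Adj (f u : V) (f w : V)) ∧
      ∀ v : K, φ (f v : V) = φ (v : V)) → K' = K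

/-!
Fix a vertex `x` and call `y` an `r`-copy of `x` if some color-preserving embedding of the
`r`-ball around `x` sends `x` to `y`. If for every `r` some `r`-copy of `x` lay outside the
`r`-ball around `x`, copies of arbitrarily large balls around `x` would occur arbitrarily far from
the finite core of the eventually periodic coloring. The complement of the core has finitely many
components and a periodic coloring has finitely many orbits, so these copies can be moved into a
single periodic coloring `ψ` with a fixed centre; by compactness they converge to an embedding of
the whole graph, onto by regularity, which makes `φ` a translate of `ψ` and hence periodic.

So for some `r` all `r`-copies of `x` lie in the `r`-ball around `x`, and the union `K` of the
`r`-balls around them is finite and connected. A color isomorphism `f` from `K` onto some `K'` sends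
`r`-copies to `r`-copies (compose `f` with the embeddings defining them), hence maps `K` into
itself, and `K' = K` by counting.
-/

open SimpleGraph Set Function

namespace EventuallyPeriodic

theorem exists_forall_of_forall_exists_mem_pi {ι β : Type*} {S : ι → Set β}
    (hS : ∀ i, (S i).Finite) {B : ℕ → Set ι} (hB : ∀ m, (B m).Finite)
    {P : ℕ → (ι → β) → Prop} (hloc : ∀ m f g, EqOn f g (B m) → P m f → P m g)
    (hanti : ∀ f, Antitone (P · f)) (hne : ∀ m, ∃ f ∈ univ.pi S, P m f) :
    ∃ f, ∀ m, P m f := by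
  -- Tychonoff for the discrete topology on `β`; `P m` only sees the finitely many coordinates `B m`
  let _ : TopologicalSpace β := ⊥
  have _ : DiscreteTopology β := ⟨rfl⟩
  have hclosed : ∀ m, IsClosed {f | P m f} := by
    intro m
    have := (hB m).to_subtype
    let res : (ι → β) → (B m → β) := fun f i => f i
    have hpre : {f | P m f} = res ⁻¹' (res '' {f | P m f}) := by
      refine (subset_preimage_image _ _).antisymm ?_
      rintro f ⟨g, hg, hgf⟩
      exact hloc m g f (fun i hi => congrFun hgf ⟨i, hi⟩) hg
    rw [hpre]
    exact (isClosed_discrete _).preimage (continuous_pi fun _ => continuous_apply _)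
  obtain ⟨f, hf⟩ := IsCompact.nonempty_iInter_of_sequence_nonempty_isCompact_isClosed
    (fun m => univ.pi S ∩ {f | P m f})
    (fun m => inter_subset_inter_right _ fun f => hanti f m.le_succ) hne
    ((isCompact_univ_pi fun i => (hS i).isCompact).inter_right (hclosed 0))
    (fun m => (isClosed_set_pi fun _ _ => isClosed_discrete _).inter (hclosed m))
  exact ⟨f, fun m => (mem_iInter.mp hf m).2⟩

theorem Finite.exists_forall_of_forall_exists {F : Type*} [Finite F] {P : ℕ → F → Prop}
    (hanti : ∀ c, Antitone (P · c)) (h : ∀ m, ∃ c, P m c) : ∃ c, ∀ m, P m c := by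
  by_contra! hcon
  choose M hM using hcon
  cases nonempty_fintype F
  obtain ⟨c, hc⟩ := h (Finset.univ.sup M)
  exact hM c (hanti c (Finset.le_sup (Finset.mem_univ c)) hc)

variable {V : Type*} {T : SimpleGraph V}

def closedBall (T : SimpleGraph V) (x : V) (m : ℕ) : Set V := {v | T.dist x v ≤ m}

@[simp] lemma mem_closedBall {x v : V} {m : ℕ} : v ∈ closedBall T x m ↔ T.dist x v ≤ m :=
  Iff.rfl

lemma center_mem_closedBall {x : V} {m : ℕ} : x ∈ closedBall T x m := by simp

lemma closedBall_mono {x : V} {m m' : ℕ} (h : m ≤ m') : closedBall T x m ⊆ closedBall T x m' :=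
  fun _ hv => le_trans hv h

lemma dist_le_of_mem_support {x y v : V} {p : T.Walk x y} (hp : p.length = T.dist x y)
    (hv : v ∈ p.support) : T.dist x v ≤ T.dist x y := by
  classical exact hp ▸ (dist_le _).trans (p.length_takeUntil_le_length hv)

lemma reachable_induce_of_closedBall_subset (hc : T.Connected) {S : Set V} {x y : V}
    (h : closedBall T x (T.dist x y) ⊆ S) (hx : x ∈ S) (hy : y ∈ S) :
    (T.induce S).Reachable ⟨x, hx⟩ ⟨y, hy⟩ := by
  obtain ⟨p, hp⟩ := (hc x y).exists_walk_length_eq_dist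
  exact ⟨p.induce S fun _ hv => h (dist_le_of_mem_support hp hv)⟩

lemma dist_map_le {W : Type*} {H : SimpleGraph W} (hc : T.Connected) {f : V → W} {S : Set V}
    (hf : ∀ a ∈ S, ∀ b ∈ S, T.Adj a b → H.Adj (f a) (f b)) {x v : V}
    (hS : closedBall T x (T.dist x v) ⊆ S) : H.dist (f x) (f v) ≤ T.dist x v := by
  obtain ⟨p, hp⟩ := (hc x v).exists_walk_length_eq_dist
  have hpS : ∀ w ∈ p.support, w ∈ S := fun _ hw => hS (dist_le_of_mem_support hp hw)
  let g : T.induce S →g H := ⟨fun a => f a, fun {a b} h => hf a a.2 b b.2 (induce_adj.mp h)⟩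
  have hlen : (p.induce S hpS).length = p.length := by
    rw [← Walk.length_map (Embedding.induce S).toHom, Walk.map_induce]; rfl
  simpa [g, hlen, hp] using dist_le ((p.induce S hpS).map g)

lemma finite_closedBall (hc : T.Connected) (hnb : ∀ v, (T.neighborSet v).Finite) (x : V)
    (m : ℕ) : (closedBall T x m).Finite := by
  induction m with
  | zero =>
    exact (finite_singleton x).subset fun v hv =>
      (hc.dist_eq_zero_iff.mp (by simpa using hv)).symm
  | succ m ih =>
    refine (ih.union (ih.biUnion fun v _ => hnb v)).subset fun w hw => ?_
    obtain ⟨p, hp⟩ := (hc w x).exists_walk_length_eq_dist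
    cases p with
    | nil => exact Or.inl center_mem_closedBall
    | cons h q =>
      refine Or.inr (mem_biUnion (x := _) ?_ h.symm)
      have := dist_le q
      rw [mem_closedBall, dist_comm] at hw ⊢
      simp only [Walk.length_cons] at hp
      omega

variable {A : Type*}

structure IsColorEmbeddingOn (T : SimpleGraph V) (φ ψ : V → A) (S : Set V) (f : V → V) :
    Prop where
  injOn : S.InjOn f
  adj_iff : ∀ u ∈ S, ∀ w ∈ S, T.Adj (f u) (f w) ↔ T.Adj u w
  color_eq : ∀ v ∈ S, ψ (f v) = φ v

namespace IsColorEmbeddingOn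

variable {φ ψ χ : V → A} {S S' : Set V} {f g : V → V}

lemma mono (hf : IsColorEmbeddingOn T φ ψ S f) (h : S' ⊆ S) : IsColorEmbeddingOn T φ ψ S' f :=
  ⟨hf.injOn.mono h, fun u hu w hw => hf.adj_iff u (h hu) w (h hw),
    fun v hv => hf.color_eq v (h hv)⟩

lemma congr (hf : IsColorEmbeddingOn T φ ψ S f) (h : EqOn f g S) :
    IsColorEmbeddingOn T φ ψ S g :=
  ⟨hf.injOn.congr h, fun u hu w hw => h hu ▸ h hw ▸ hf.adj_iff u hu w hw,
    fun v hv => h hv ▸ hf.color_eq v hv⟩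

lemma comp (hg : IsColorEmbeddingOn T ψ χ S' g) (hf : IsColorEmbeddingOn T φ ψ S f)
    (h : MapsTo f S S') : IsColorEmbeddingOn T φ χ S (g ∘ f) :=
  ⟨hg.injOn.comp hf.injOn h,
    fun u hu w hw => (hg.adj_iff _ (h hu) _ (h hw)).trans (hf.adj_iff u hu w hw),
    fun v hv => (hg.color_eq _ (h hv)).trans (hf.color_eq v hv)⟩

lemma congr_color {ψ' : V → A} (hf : IsColorEmbeddingOn T φ ψ S f) (h : EqOn ψ ψ' (f '' S)) :
    IsColorEmbeddingOn T φ ψ' S f :=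
  ⟨hf.injOn, hf.adj_iff, fun v hv => (h (mem_image_of_mem f hv)).symm.trans (hf.color_eq v hv)⟩

lemma dist_le (hc : T.Connected) (hf : IsColorEmbeddingOn T φ ψ S f) {x v : V}
    (h : closedBall T x (T.dist x v) ⊆ S) : T.dist (f x) (f v) ≤ T.dist x v :=
  dist_map_le hc (fun a ha b hb => (hf.adj_iff a ha b hb).mpr) h

lemma mapsTo_closedBall (hc : T.Connected) (hf : IsColorEmbeddingOn T φ ψ S f) {x : V} {m : ℕ}
    (h : closedBall T x m ⊆ S) : MapsTo f (closedBall T x m) (closedBall T (f x) m) :=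
  fun _ hv => (hf.dist_le hc ((closedBall_mono hv).trans h)).trans hv

lemma of_forall_closedBall {x : V} (h : ∀ m, IsColorEmbeddingOn T φ ψ (closedBall T x m) f) :
    IsColorEmbeddingOn T φ ψ univ f := by
  have hmem : ∀ u w, u ∈ closedBall T x (max (T.dist x u) (T.dist x w)) ∧
      w ∈ closedBall T x (max (T.dist x u) (T.dist x w)) := by simp
  exact ⟨fun u _ w _ => (h _).injOn (hmem u w).1 (hmem u w).2,
    fun u _ w _ => (h _).adj_iff u (hmem u w).1 w (hmem u w).2,
    fun v _ => (h (T.dist x v)).color_eq v (mem_closedBall.mpr le_rfl)⟩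

end IsColorEmbeddingOn

theorem surjective_of_injective_of_adj (hc : T.Connected)
    (hnb : ∀ v, (T.neighborSet v).Finite) {k : ℕ} (hreg : ∀ v, (T.neighborSet v).ncard = k)
    {F : V → V} (hinj : Injective F) (hadj : ∀ u w, T.Adj u w → T.Adj (F u) (F w)) :
    Surjective F := by
  have himage : ∀ v, F '' T.neighborSet v = T.neighborSet (F v) := fun v =>
    eq_of_subset_of_ncard_le (image_subset_iff.mpr fun _ => hadj v _)
      (by rw [ncard_image_of_injective _ hinj, hreg, hreg]) (hnb _)
  have hclosed : ∀ {a b : V} (p : T.Walk a b), a ∈ range F → b ∈ range F := by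
    intro a b p
    induction p with
    | nil => exact id
    | cons h p ih =>
      rintro ⟨u, rfl⟩
      obtain ⟨w, -, hw⟩ := (himage u).symm.subset h
      exact ih ⟨w, hw⟩
  obtain ⟨v⟩ := hc.nonempty
  exact fun w => hclosed (hc (F v) w).some (mem_range_self v)

theorem exists_isColorEmbeddingOn_univ (hc : T.Connected)
    (hball : ∀ x m, (closedBall T x m).Finite) {φ ψ : V → A} {x z : V}
    (h : ∀ m, ∃ f, f x = z ∧ IsColorEmbeddingOn T φ ψ (closedBall T x m) f) :
    ∃ F, F x = z ∧ IsColorEmbeddingOn T φ ψ univ F := by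
  classical
  obtain ⟨F, hF⟩ := exists_forall_of_forall_exists_mem_pi
    (S := fun v => closedBall T z (T.dist x v)) (B := closedBall T x)
    (P := fun m f => f x = z ∧ IsColorEmbeddingOn T φ ψ (closedBall T x m) f)
    (fun v => hball _ _) (hball x)
    (fun m f g hfg hf => ⟨(hfg center_mem_closedBall).symm.trans hf.1, hf.2.congr hfg⟩)
    (fun f m m' hmm' hf => ⟨hf.1, hf.2.mono (closedBall_mono hmm')⟩)
    (fun m => by
      obtain ⟨f, hfx, hf⟩ := h m
      refine ⟨fun v => if T.dist x v ≤ m then f v else z, fun v _ => ?_, ?_, ?_⟩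
      · dsimp only
        split_ifs with hv
        · exact hfx ▸ hf.dist_le hc (closedBall_mono hv)
        · exact center_mem_closedBall
      · simpa [T.dist_self] using hfx
      · exact hf.congr fun v hv => (if_pos hv).symm)
  exact ⟨F, (hF 0).1, .of_forall_closedBall fun m => (hF m).2⟩

theorem _root_.IsPeriodicColoring.of_equiv {φ ψ : V → A} (hψ : IsPeriodicColoring T ψ)
    (h : V ≃ V) (hadj : ∀ u w, T.Adj (h u) (h w) ↔ T.Adj u w) (hcol : ∀ v, ψ (h v) = φ v) :
    IsPeriodicColoring T φ := by
  obtain ⟨Γ, hΓadj, hΓcol, hΓfin⟩ := hψ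
  let c := (MulAut.conj (h⁻¹ : Equiv.Perm V)).toMonoidHom
  have hconj : ∀ γ v, c γ v = h.symm (γ (h v)) := fun γ v => by
    simp [c, MulAut.conj_apply, Equiv.Perm.mul_apply, Equiv.Perm.inv_def]
  have hadj_symm : ∀ u w, T.Adj (h.symm u) (h.symm w) ↔ T.Adj u w := fun u w => by
    simpa using (hadj (h.symm u) (h.symm w)).symm
  refine ⟨Γ.map c, ?_, ?_, ?_⟩
  · rintro _ ⟨γ, hγ, rfl⟩ u w
    rw [hconj, hconj, hadj_symm, hΓadj γ hγ, hadj]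
  · rintro _ ⟨γ, hγ, rfl⟩ v
    rw [hconj, ← hcol, Equiv.apply_symm_apply, hΓcol γ hγ, hcol]
  · refine Finite.of_surjective (α := Quot fun x y : V => ∃ γ ∈ Γ, γ x = y)
      (Quot.lift (fun a => Quot.mk _ (h.symm a)) ?_) ?_
    · rintro a _ ⟨γ, hγ, rfl⟩
      exact Quot.sound ⟨c γ, Subgroup.mem_map_of_mem c hγ, by simp [hconj]⟩
    · rintro ⟨w⟩
      exact ⟨Quot.mk _ (h w), by simp⟩

theorem _root_.IsPeriodicColoring.of_forall_isColorEmbeddingOn_closedBall (hc : T.Connected)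
    (hnb : ∀ v, (T.neighborSet v).Finite) {k : ℕ} (hreg : ∀ v, (T.neighborSet v).ncard = k)
    {φ ψ : V → A} (hψ : IsPeriodicColoring T ψ) (x : V)
    (h : ∀ m, ∃ f, IsColorEmbeddingOn T φ ψ (closedBall T x m) f) : IsPeriodicColoring T φ := by
  obtain ⟨Γ, hΓadj, hΓcol, hΓfin⟩ := id hψ
  let r : V → V → Prop := fun a b => ∃ γ ∈ Γ, γ a = b
  have hr : Equivalence r :=
    ⟨fun a => ⟨1, Γ.one_mem, rfl⟩, fun ⟨γ, hγ, hab⟩ => ⟨γ⁻¹, Γ.inv_mem hγ, by simp [← hab]⟩,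
      fun ⟨γ, hγ, hab⟩ ⟨δ, hδ, hbc⟩ => ⟨δ * γ, Γ.mul_mem hδ hγ, by simp [hab, hbc]⟩⟩
  obtain ⟨q, hq⟩ := Finite.exists_forall_of_forall_exists (F := Quot r)
    (P := fun m q => ∃ f, IsColorEmbeddingOn T φ ψ (closedBall T x m) f ∧ Quot.mk r (f x) = q)
    (fun q m m' hmm' ⟨f, hf, hfq⟩ => ⟨f, hf.mono (closedBall_mono hmm'), hfq⟩)
    (fun m => (h m).elim fun f hf => ⟨_, f, hf, rfl⟩)
  obtain ⟨z, rfl⟩ := Quot.exists_rep q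
  have hz : ∀ m, ∃ f, f x = z ∧ IsColorEmbeddingOn T φ ψ (closedBall T x m) f := fun m => by
    obtain ⟨f, hf, hfz⟩ := hq m
    obtain ⟨γ, hγ, hγz⟩ := hr.eqvGen_iff.mp (Quot.eqvGen_exact hfz)
    have hγemb : IsColorEmbeddingOn T ψ ψ univ γ :=
      ⟨γ.injective.injOn, fun u _ w _ => hΓadj γ hγ u w, fun v _ => hΓcol γ hγ v⟩
    exact ⟨γ ∘ f, hγz, hγemb.comp hf (mapsTo_univ _ _)⟩
  obtain ⟨F, -, hF⟩ := exists_isColorEmbeddingOn_univ hc (finite_closedBall hc hnb) hz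
  have hFinj : Injective F := injOn_univ.mp hF.injOn
  have hFsurj := surjective_of_injective_of_adj hc hnb hreg hFinj
    fun u w => (hF.adj_iff u trivial w trivial).mpr
  exact hψ.of_equiv (.ofBijective F ⟨hFinj, hFsurj⟩) (fun u w => hF.adj_iff u trivial w trivial)
    fun v => hF.color_eq v trivial

def copyCenters (T : SimpleGraph V) (φ : V → A) (x : V) (r : ℕ) : Set V :=
  {y | ∃ f, f x = y ∧ IsColorEmbeddingOn T φ φ (closedBall T x r) f}

lemma self_mem_copyCenters {φ : V → A} {x : V} {r : ℕ} : x ∈ copyCenters T φ x r :=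
  ⟨id, rfl, injOn_id _, fun _ _ _ _ => Iff.rfl, fun _ _ => rfl⟩

lemma closedBall_subset_componentComplMk (hc : T.Connected) {K : Set V} {y : V} {m : ℕ}
    (h : closedBall T y m ⊆ Kᶜ) :
    closedBall T y m ⊆ T.componentComplMk (h center_mem_closedBall) :=
  fun _ hw => ⟨h hw, ConnectedComponent.sound
    (reachable_induce_of_closedBall_subset hc ((closedBall_mono hw).trans h) _ _).symm⟩

theorem _root_.IsEventuallyPeriodic.isPeriodicColoring_of_far_copyCenters (hc : T.Connected)
    (hnb : ∀ v, (T.neighborSet v).Finite) {k : ℕ} (hreg : ∀ v, (T.neighborSet v).ncard = k)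
    {φ : V → A} (hep : IsEventuallyPeriodic T φ) (x : V)
    (hfar : ∀ m, ∃ y ∈ copyCenters T φ x m, m < T.dist x y) : IsPeriodicColoring T φ := by
  obtain ⟨K, -, hKfin, -, hψ⟩ := hep
  have : T.LocallyFinite := fun v => (hnb v).fintype
  have : Fact T.Preconnected := ⟨hc.preconnected⟩
  have : Finite (T.ComponentCompl K) := by
    simpa using T.componentCompl_finite hKfin.toFinset
  obtain ⟨C, hC⟩ := (hKfin.image (T.dist x)).bddAbove
  let P m (c : T.ComponentCompl K) :=
    ∃ f, IsColorEmbeddingOn T φ φ (closedBall T x m) f ∧ closedBall T (f x) m ⊆ c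
  -- an `(m + C)`-copy farther than `m + C` from `x` has its `m`-ball outside `K`
  have hP : ∀ m, ∃ c, P m c := fun m => by
    obtain ⟨_, ⟨f, rfl, hf⟩, hfx⟩ := hfar (m + C)
    have hout : closedBall T (f x) m ⊆ Kᶜ := fun w hw hwK => by
      have := hC (mem_image_of_mem _ hwK)
      have := hc.dist_triangle (u := x) (v := w) (w := f x)
      rw [mem_closedBall, dist_comm] at hw
      omega
    exact ⟨_, f, hf.mono (closedBall_mono (by omega)), closedBall_subset_componentComplMk hc hout⟩
  obtain ⟨c, hc'⟩ := Finite.exists_forall_of_forall_exists (P := P)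
    (fun c m m' hmm' ⟨f, hf, hfc⟩ =>
      ⟨f, hf.mono (closedBall_mono hmm'), (closedBall_mono hmm').trans hfc⟩) hP
  obtain ⟨v, rfl⟩ := c.exists_rep
  obtain ⟨ψ, hψper, hψφ⟩ := hψ v
  refine hψper.of_forall_isColorEmbeddingOn_closedBall hc hnb hreg x fun m => ?_
  obtain ⟨f, hf, hfc⟩ := hc' m
  refine ⟨f, hf.congr_color ?_⟩
  rintro _ ⟨u, hu, rfl⟩
  obtain ⟨hw, hwc⟩ := hfc (hf.mapsTo_closedBall hc subset_rfl hu)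
  exact (hψφ ⟨_, hw⟩ (ConnectedComponent.exact hwc).symm).symm

def cthickening (T : SimpleGraph V) (O : Set V) (r : ℕ) : Set V := ⋃ o ∈ O, closedBall T o r

lemma mem_cthickening {O : Set V} {r : ℕ} {v : V} :
    v ∈ cthickening T O r ↔ ∃ o ∈ O, v ∈ closedBall T o r := by
  simp [cthickening]

lemma closedBall_subset_cthickening {O : Set V} {r : ℕ} {o : V} (ho : o ∈ O) :
    closedBall T o r ⊆ cthickening T O r :=
  subset_biUnion_of_mem (u := fun o => closedBall T o r) ho

lemma finite_cthickening (hball : ∀ x m, (closedBall T x m).Finite) {O : Set V}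
    (hO : O.Finite) (r : ℕ) : (cthickening T O r).Finite :=
  hO.biUnion fun o _ => hball o r

lemma connected_induce_cthickening (hc : T.Connected) {O : Set V} {x : V} {r : ℕ} (hx : x ∈ O)
    (hO : O ⊆ closedBall T x r) : (T.induce (cthickening T O r)).Connected := by
  refine induce_connected_of_patches x
    (closedBall_subset_cthickening hx center_mem_closedBall) fun hv => ?_
  obtain ⟨o, ho, hov⟩ := mem_cthickening.mp hv
  have hxo : x ∈ closedBall T o r := by simpa [dist_comm] using hO ho
  have hreach := fun {y} (hy : y ∈ closedBall T o r) =>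
    reachable_induce_of_closedBall_subset hc (closedBall_mono hy) center_mem_closedBall hy
  exact ⟨closedBall T o r, closedBall_subset_cthickening ho, hxo, hov,
    (hreach hxo).symm.trans (hreach hov)⟩

lemma exists_isColorEmbeddingOn_of_equiv {φ : V → A} {K K' : Set V} (e : K ≃ K')
    (hadj : ∀ u w : K, T.Adj u w ↔ T.Adj (e u) (e w)) (hcol : ∀ v : K, φ (e v) = φ v) :
    ∃ f, f '' K = K' ∧ IsColorEmbeddingOn T φ φ K f := by
  classical
  let f : V → V := fun v => if h : v ∈ K then e ⟨v, h⟩ else v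
  have hf : ∀ u (hu : u ∈ K), f u = e ⟨u, hu⟩ := fun u hu => dif_pos hu
  refine ⟨f, ?_, fun u hu w hw huw => ?_, fun u hu w hw => ?_, fun v hv => ?_⟩
  · refine (image_subset_iff.mpr fun u hu => ?_).antisymm fun w hw => ?_
    · rw [mem_preimage, hf u hu]
      exact (e _).2
    · exact ⟨e.symm ⟨w, hw⟩, (e.symm _).2, by rw [hf _ (e.symm _).2, e.apply_symm_apply]⟩
  · rw [hf u hu, hf w hw] at huw
    simpa using e.injective (Subtype.ext huw)
  · rw [hf u hu, hf w hw]
    exact (hadj ⟨u, hu⟩ ⟨w, hw⟩).symm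
  · rw [hf v hv, hcol]

theorem appearsOnce_cthickening_copyCenters (hc : T.Connected)
    (hball : ∀ x m, (closedBall T x m).Finite) {φ : V → A} {x : V} {r : ℕ}
    (hr : copyCenters T φ x r ⊆ closedBall T x r) :
    AppearsOnce T φ (cthickening T (copyCenters T φ x r) r) := by
  set O := copyCenters T φ x r
  set K := cthickening T O r
  rintro K' - ⟨e, hadj, hcol⟩
  obtain ⟨f, rfl, hf⟩ := exists_isColorEmbeddingOn_of_equiv e hadj hcol
  have hfO : MapsTo f O O := by
    rintro _ ⟨g, rfl, hg⟩
    exact ⟨f ∘ g, rfl, hf.comp hg ((hg.mapsTo_closedBall hc subset_rfl).mono_right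
      (closedBall_subset_cthickening ⟨g, rfl, hg⟩))⟩
  have hfK : f '' K ⊆ K := by
    rintro _ ⟨u, hu, rfl⟩
    obtain ⟨o, ho, hou⟩ := mem_cthickening.mp hu
    exact closedBall_subset_cthickening (hfO ho)
      ((hf.dist_le hc ((closedBall_mono hou).trans (closedBall_subset_cthickening ho))).trans hou)
  exact eq_of_subset_of_ncard_le hfK hf.injOn.ncard_image.ge
    (finite_cthickening hball ((hball x r).subset hr) r)

end EventuallyPeriodic

open EventuallyPeriodic in
theorem stmt_8 {V A : Type*} (T : SimpleGraph V) (φ : V → A) (k : ℕ)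
    (hk : 2 ≤ k) (htree : T.IsTree) (hreg : ∀ v : V, (T.neighborSet v).ncard = k)
    (hep : IsEventuallyPeriodic T φ) (hnp : ¬ IsPeriodicColoring T φ) :
    ∃ K : Set V, K.Nonempty ∧ K.Finite ∧ (T.induce K).Connected ∧
      AppearsOnce T φ K := by
  have hc := htree.connected
  have hnb : ∀ v, (T.neighborSet v).Finite := fun v => finite_of_ncard_pos (by rw [hreg]; omega)
  have hball := finite_closedBall hc hnb
  obtain ⟨x⟩ := hc.nonempty
  obtain ⟨r, hr⟩ : ∃ r, copyCenters T φ x r ⊆ closedBall T x r := by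
    by_contra! h
    exact hnp (hep.isPeriodicColoring_of_far_copyCenters hc hnb hreg x fun m => by
      simpa [not_subset] using h m)
  exact ⟨_, ⟨x, closedBall_subset_cthickening self_mem_copyCenters center_mem_closedBall⟩,
    finite_cthickening hball ((hball x r).subset hr) r,
    connected_induce_cthickening hc self_mem_copyCenters hr,
    appearsOnce_cthickening_copyCenters hc hball hr⟩
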